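/- For every complex Lie algebra 𝔤 and every (e₁,e₂) ∈ ℂ², the bracket defined on Ḡ^(e₁,e₂) = 𝔤 ⊗ A^(e₁,e₂) by the structure equations of the genus-one current algebra family is antisymmetric and satisfies the Jacobi identity, i.e. Ḡ^(e₁,e₂) is a Lie algebra over ℂ. -/

import Mathlib

open scoped Classical

/-- The bracket of the genus-one current algebra family
`Ḡ^(e₁,e₂) = 𝔤 ⊗ A^(e₁,e₂)`, where the tensor product of `𝔤` with the
ℂ-vector space with basis `{Aₙ}_{n∈ℤ}` is modeled as `ℤ →₀ 𝔤`, the pure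
tensor `x ⊗ Aₙ` corresponding to `Finsupp.single n x`.  The bracket is the
bilinear extension of:
`[x ⊗ Aₙ, y ⊗ Aₘ] = [x,y] ⊗ Aₙ₊ₘ` if `n` or `m` is even, and
`[x ⊗ Aₙ, y ⊗ Aₘ] = [x,y] ⊗ (Aₙ₊ₘ + 3e₁Aₙ₊ₘ₋₂ + (e₁−e₂)(2e₁+e₂)Aₙ₊ₘ₋₄)`
if both `n` and `m` are odd. -/
noncomputable def Gbr (𝔤 : Type*) [LieRing 𝔤] [LieAlgebra ℂ 𝔤]
    (e₁ e₂ : ℂ) (f g : ℤ →₀ 𝔤) : ℤ →₀ 𝔤 :=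
  f.sum fun n x => g.sum fun m y =>
    if Odd n ∧ Odd m then
      Finsupp.single (n + m) ⁅x, y⁆ + (3 * e₁) • Finsupp.single (n + m - 2) ⁅x, y⁆
        + ((e₁ - e₂) * (2 * e₁ + e₂)) • Finsupp.single (n + m - 4) ⁅x, y⁆
    else Finsupp.single (n + m) ⁅x, y⁆

/-! The bracket is the bracket of `𝔤` tensored with a commutative product on the span of the `Aₙ`:
`AₙAₘ = Aₙ₊ₘ φ` for odd `n`, `m` and `AₙAₘ = Aₙ₊ₘ` otherwise, where `Aₛ φ` stands for
`Aₛ + 3e₁Aₛ₋₂ + (e₁−e₂)(2e₁+e₂)Aₛ₋₄`. Both identities are additive in each argument, so it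
suffices to check them on pure tensors `x ⊗ Aₙ`. There `(AₙAₘ)Aₚ = Aₙ₊ₘ₊ₚ φ` if at least two of
`n, m, p` are odd and `Aₙ₊ₘ₊ₚ` otherwise (`φ` never enters twice, as the sum of two odd indices is
even). This is symmetric in `n, m, p`, so the three terms of the Jacobiator are `⁅⁅x, y⁆, z⁆`,
`⁅⁅y, z⁆, x⁆`, `⁅⁅z, x⁆, y⁆` tensored with one and the same element, and the Jacobi identity of
`𝔤` concludes. -/

open Finsupp

theorem Finsupp.eq_zero_of_additive_of_single {α M N : Type*} [AddZeroClass M] [AddGroup N]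
    {F : (α →₀ M) → N} (hadd : ∀ f g, F (f + g) = F f + F g)
    (hsingle : ∀ i x, F (single i x) = 0) (f : α →₀ M) : F f = 0 :=
  DFunLike.congr_fun (Finsupp.addHom_ext (f := AddMonoidHom.mk' F hadd) (g := 0) hsingle) f

def jacobiator {V : Type*} [Add V] (B : V → V → V) (f g h : V) : V :=
  B (B f g) h + B (B g h) f + B (B h f) g

theorem jacobiator_rotate {V : Type*} [AddCommSemigroup V] (B : V → V → V) (f g h : V) :
    jacobiator B f g h = jacobiator B g h f := by
  simp only [jacobiator, add_comm (B (B f g) h), add_assoc]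

section BiadditiveOnFinsupp

variable {α M : Type*} [AddCommGroup M] {B : (α →₀ M) → (α →₀ M) → (α →₀ M)}

theorem Finsupp.eq_neg_swap_of_single
    (hl : ∀ f f' g, B (f + f') g = B f g + B f' g) (hr : ∀ f g g', B f (g + g') = B f g + B f g')
    (hsingle : ∀ i j x y, B (single i x) (single j y) = -B (single j y) (single i x))
    (f g : α →₀ M) : B f g = -B g f := by
  rw [← add_eq_zero_iff_eq_neg]
  refine eq_zero_of_additive_of_single (F := fun g => B f g + B g f)
    (fun g g' => by simp only [hl, hr]; abel) (fun j y => ?_) g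
  refine eq_zero_of_additive_of_single (F := fun f => B f (single j y) + B (single j y) f)
    (fun f f' => by simp only [hl, hr]; abel) (fun i x => ?_) f
  rw [hsingle, neg_add_cancel]

theorem Finsupp.jacobiator_eq_zero_of_single
    (hl : ∀ f f' g, B (f + f') g = B f g + B f' g) (hr : ∀ f g g', B f (g + g') = B f g + B f g')
    (hsingle : ∀ i j k x y z, jacobiator B (single i x) (single j y) (single k z) = 0)
    (f g h : α →₀ M) : jacobiator B f g h = 0 := by
  -- additivity in the first argument, transported to the others by `jacobiator_rotate`
  have hadd (f f' g h) : jacobiator B (f + f') g h = jacobiator B f g h + jacobiator B f' g h := by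
    simp only [jacobiator, hl, hr]; abel
  have hsingle₂ (i j x y h) : jacobiator B (single i x) (single j y) h = 0 := by
    rw [jacobiator_rotate, jacobiator_rotate]
    exact eq_zero_of_additive_of_single (F := fun h => jacobiator B h _ _) (hadd · · _ _)
      (fun k z => by rw [jacobiator_rotate]; exact hsingle i j k x y z) h
  have hsingle₁ (i x g h) : jacobiator B (single i x) g h = 0 := by
    rw [jacobiator_rotate]
    exact eq_zero_of_additive_of_single (F := fun g => jacobiator B g _ _) (hadd · · _ _)
      (fun j y => by rw [jacobiator_rotate, jacobiator_rotate]; exact hsingle₂ i j x y h) g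
  exact eq_zero_of_additive_of_single (F := fun f => jacobiator B f g h) (hadd · · g h)
    (fun i x => hsingle₁ i x g h) f

end BiadditiveOnFinsupp

theorem lie_lie_add_lie_lie_add_lie_lie {L : Type*} [LieRing L] (x y z : L) :
    ⁅⁅x, y⁆, z⁆ + ⁅⁅y, z⁆, x⁆ + ⁅⁅z, x⁆, y⁆ = 0 := by
  rw [← lie_skew ⁅x, y⁆ z, ← lie_skew ⁅y, z⁆ x, ← lie_skew ⁅z, x⁆ y, ← neg_add, ← neg_add,
    neg_eq_zero, add_rotate]
  exact lie_jacobi x y z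

section GenusOneCurrentAlgebra

variable {𝔤 : Type*} [LieRing 𝔤] [LieAlgebra ℂ 𝔤] (e₁ e₂ : ℂ)

/-- `z ↦ z ⊗ (Aₛ + 3e₁Aₛ₋₂ + (e₁−e₂)(2e₁+e₂)Aₛ₋₄)` -/
noncomputable def twistedSingle (s : ℤ) : 𝔤 →ₗ[ℂ] ℤ →₀ 𝔤 :=
  lsingle s + (3 * e₁) • lsingle (s - 2) + ((e₁ - e₂) * (2 * e₁ + e₂)) • lsingle (s - 4)

noncomputable def singleOrTwisted (P : Prop) (s : ℤ) : 𝔤 →ₗ[ℂ] ℤ →₀ 𝔤 :=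
  if P then twistedSingle e₁ e₂ s else lsingle s

theorem Gbr_add_left (f f' g : ℤ →₀ 𝔤) :
    Gbr 𝔤 e₁ e₂ (f + f') g = Gbr 𝔤 e₁ e₂ f g + Gbr 𝔤 e₁ e₂ f' g := by
  refine sum_add_index' (fun n => by simp) fun n x x' => ?_
  rw [← sum_add]
  refine sum_congr fun m _ => ?_
  simp only [add_lie, Finsupp.single_add, smul_add]
  split_ifs <;> abel

theorem Gbr_add_right (f g g' : ℤ →₀ 𝔤) :
    Gbr 𝔤 e₁ e₂ f (g + g') = Gbr 𝔤 e₁ e₂ f g + Gbr 𝔤 e₁ e₂ f g' := by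
  simp only [Gbr, ← sum_add]
  refine sum_congr fun n _ => sum_add_index' (fun m => by simp) fun m y y' => ?_
  simp only [lie_add, Finsupp.single_add, smul_add]
  split_ifs <;> abel

theorem Gbr_single_single (n m : ℤ) (x y : 𝔤) :
    Gbr 𝔤 e₁ e₂ (single n x) (single m y) =
      singleOrTwisted e₁ e₂ (Odd n ∧ Odd m) (n + m) ⁅x, y⁆ := by
  rw [Gbr, sum_single_index (by simp), sum_single_index (by simp), singleOrTwisted]
  split_ifs <;> rfl

theorem Gbr_single_single_swap (n m : ℤ) (x y : 𝔤) :
    Gbr 𝔤 e₁ e₂ (single n x) (single m y) = -Gbr 𝔤 e₁ e₂ (single m y) (single n x) := by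
  rw [Gbr_single_single, Gbr_single_single, ← map_neg, lie_skew, and_comm, add_comm]

theorem Gbr_single_single_of_even {k : ℤ} (hk : Even k) (p : ℤ) (w z : 𝔤) :
    Gbr 𝔤 e₁ e₂ (single k w) (single p z) = single (k + p) ⁅w, z⁆ := by
  rw [Gbr_single_single, singleOrTwisted, if_neg (fun h => Int.not_even_iff_odd.2 h.1 hk)]
  rfl

theorem Gbr_twistedSingle_single {s : ℤ} (hs : Even s) (p : ℤ) (w z : 𝔤) :
    Gbr 𝔤 e₁ e₂ (twistedSingle e₁ e₂ s w) (single p z) = twistedSingle e₁ e₂ (s + p) ⁅w, z⁆ := by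
  have hs₂ : Even (s - 2) := hs.sub even_two
  have hs₄ : Even (s - 4) := hs.sub (by decide)
  simp only [twistedSingle, LinearMap.add_apply, LinearMap.smul_apply, lsingle_apply, smul_single,
    Gbr_add_left, Gbr_single_single_of_even _ _ hs, Gbr_single_single_of_even _ _ hs₂,
    Gbr_single_single_of_even _ _ hs₄, smul_lie]
  rw [sub_add_eq_add_sub, sub_add_eq_add_sub]

theorem Gbr_Gbr_single_single_single (n m p : ℤ) (x y z : 𝔤) :
    Gbr 𝔤 e₁ e₂ (Gbr 𝔤 e₁ e₂ (single n x) (single m y)) (single p z) =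
      singleOrTwisted e₁ e₂ (Odd n ∧ Odd m ∨ Odd m ∧ Odd p ∨ Odd p ∧ Odd n) (n + m + p)
        ⁅⁅x, y⁆, z⁆ := by
  rw [Gbr_single_single]
  by_cases hnm : Odd n ∧ Odd m
  · rw [singleOrTwisted, if_pos hnm, Gbr_twistedSingle_single _ _ (hnm.1.add_odd hnm.2),
      singleOrTwisted, if_pos (Or.inl hnm)]
  · have hcond : Odd (n + m) ∧ Odd p ↔ Odd n ∧ Odd m ∨ Odd m ∧ Odd p ∨ Odd p ∧ Odd n := by
      simp only [Int.odd_iff] at hnm ⊢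
      omega
    rw [singleOrTwisted, if_neg hnm, lsingle_apply, Gbr_single_single, hcond]

theorem Gbr_jacobiator_single (n m p : ℤ) (x y z : 𝔤) :
    jacobiator (Gbr 𝔤 e₁ e₂) (single n x) (single m y) (single p z) = 0 := by
  have hrot (a b c : ℤ) : (Odd b ∧ Odd c ∨ Odd c ∧ Odd a ∨ Odd a ∧ Odd b) ↔
      (Odd a ∧ Odd b ∨ Odd b ∧ Odd c ∨ Odd c ∧ Odd a) := by tauto
  rw [jacobiator, Gbr_Gbr_single_single_single, Gbr_Gbr_single_single_single,
    Gbr_Gbr_single_single_single, hrot m p n, hrot n m p, add_rotate m, add_rotate p,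
    ← map_add, ← map_add, lie_lie_add_lie_lie_add_lie_lie, map_zero]

end GenusOneCurrentAlgebra

/-- For every complex Lie algebra `𝔤` and every
`(e₁,e₂) ∈ ℂ²`, the bracket defined on `Ḡ^(e₁,e₂) = 𝔤 ⊗ A^(e₁,e₂)` by the
structure equations of the genus-one current algebra family is antisymmetric
and satisfies the Jacobi identity, i.e. `Ḡ^(e₁,e₂)` is a Lie algebra over ℂ. -/
theorem Gbr_antisymm_and_jacobi (𝔤 : Type) [LieRing 𝔤] [LieAlgebra ℂ 𝔤]
    (e₁ e₂ : ℂ) :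
    (∀ f g : ℤ →₀ 𝔤, Gbr 𝔤 e₁ e₂ f g = - Gbr 𝔤 e₁ e₂ g f) ∧
    (∀ f g h : ℤ →₀ 𝔤,
      Gbr 𝔤 e₁ e₂ (Gbr 𝔤 e₁ e₂ f g) h + Gbr 𝔤 e₁ e₂ (Gbr 𝔤 e₁ e₂ g h) f
        + Gbr 𝔤 e₁ e₂ (Gbr 𝔤 e₁ e₂ h f) g = 0) :=
  ⟨eq_neg_swap_of_single (Gbr_add_left e₁ e₂) (Gbr_add_right e₁ e₂) (Gbr_single_single_swap e₁ e₂),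
    jacobiator_eq_zero_of_single (Gbr_add_left e₁ e₂) (Gbr_add_right e₁ e₂)
      (Gbr_jacobiator_single e₁ e₂)⟩
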